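/- arXiv:1605.07095 — 5 statements merged into one kernel-verified Lean document; each statement's English description precedes it below -/
import Mathlib

section
/- Suppose h_τ and h are positive self-adjoint operators with Hilbert-Schmidt inverses such that ‖h_τ^{-1} - h^{-1}‖_{HS} → 0 as τ → ∞. Then ‖(τ(e^{h_τ/τ} - 1))^{-1} - h_τ^{-1}‖_{HS} → 0 as τ → ∞. -/
open Filter Topology

/-!
With `x = l / τ`, the elementary bounds `0 ≤ 1/x - 1/(eˣ - 1) ≤ 1` give, for an eigenvalue `l > 0`
of `h_τ`, `0 ≤ 1/l - 1/(τ(e^{l/τ} - 1)) ≤ min (1/l) (1/τ)`. Comparing `1/λ_τ` with `1/λ`, each term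
of the series is at most `2 (1/λ_τ - 1/λ)² + min (2/λ²) (1/τ²)`: the first part sums to something
tending to `0` by hypothesis, the second by dominated convergence with dominating series `2/λ²`.
-/

noncomputable def greenFn (τ l : ℝ) : ℝ := 1 / (τ * (Real.exp (l / τ) - 1))

lemma Real.one_div_sub_one_div_exp_sub_one_mem_Icc {x : ℝ} (hx : 0 < x) :
    1 / x - 1 / (Real.exp x - 1) ∈ Set.Icc 0 1 := by
  have hexp : x ≤ Real.exp x - 1 := by linarith [Real.add_one_le_exp x]
  have hexp_pos : 0 < Real.exp x - 1 := hx.trans_le hexp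
  have hexp_le : (1 - x) * Real.exp x ≤ 1 :=
    calc (1 - x) * Real.exp x ≤ Real.exp (-x) * Real.exp x := by
          gcongr; linarith [Real.add_one_le_exp (-x)]
      _ = 1 := by rw [← Real.exp_add, neg_add_cancel, Real.exp_zero]
  constructor
  · exact sub_nonneg.mpr (one_div_le_one_div_of_le hx hexp)
  · rw [div_sub_div _ _ hx.ne' hexp_pos.ne', div_le_one (mul_pos hx hexp_pos)]
    linear_combination hexp_le

lemma greenFn_nonneg {τ l : ℝ} (hτ : 0 ≤ τ) (hl : 0 ≤ l) : 0 ≤ greenFn τ l := by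
  have hexp : 0 ≤ Real.exp (l / τ) - 1 := sub_nonneg.mpr (Real.one_le_exp (div_nonneg hl hτ))
  unfold greenFn
  positivity

lemma one_div_sub_greenFn_mem_Icc {τ l : ℝ} (hτ : 0 < τ) (hl : 0 < l) :
    1 / l - greenFn τ l ∈ Set.Icc 0 (1 / τ) := by
  have hscale : 1 / l - greenFn τ l = 1 / τ * (1 / (l / τ) - 1 / (Real.exp (l / τ) - 1)) := by
    unfold greenFn; field_simp
  obtain ⟨h0, h1⟩ := Real.one_div_sub_one_div_exp_sub_one_mem_Icc (div_pos hl hτ)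
  rw [hscale]
  exact ⟨by positivity, mul_le_of_le_one_right (by positivity) h1⟩

lemma sq_greenFn_sub_one_div_le_min {τ l : ℝ} (hτ : 0 < τ) (hl : 0 < l) :
    (greenFn τ l - 1 / l) ^ 2 ≤ min ((1 / l) ^ 2) ((1 / τ) ^ 2) := by
  obtain ⟨h0, h1⟩ := one_div_sub_greenFn_mem_Icc hτ hl
  have hg := greenFn_nonneg hτ.le hl.le
  rw [← neg_sub, neg_sq]
  exact le_min (pow_le_pow_left₀ h0 (by linarith) 2) (pow_le_pow_left₀ h0 h1 2)

lemma min_sq_le_two_mul_sq_sub_add_min (a b c : ℝ) :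
    min (a ^ 2) c ≤ 2 * (a - b) ^ 2 + min (2 * b ^ 2) c := by
  have hab : a ^ 2 ≤ 2 * (a - b) ^ 2 + 2 * b ^ 2 := by
    nlinarith [add_sq_le (a := a - b) (b := b)]
  rcases le_total (2 * b ^ 2) c with h | h
  · rw [min_eq_left h]; exact (min_le_left _ _).trans hab
  · rw [min_eq_right h]; exact (min_le_right _ _).trans (le_add_of_nonneg_left (by positivity))

lemma Summable.sq_sub {ι : Type*} {a b : ι → ℝ} (ha : Summable fun i => a i ^ 2)
    (hb : Summable fun i => b i ^ 2) : Summable fun i => (a i - b i) ^ 2 :=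
  .of_nonneg_of_le (fun _ => sq_nonneg _)
    (fun i => by simpa [sub_eq_add_neg] using add_sq_le (a := a i) (b := -b i))
    ((ha.add hb).mul_left 2)

lemma tendsto_tsum_min_of_summable {α ι : Type*} {l : Filter α} {f : ι → ℝ} {g : α → ℝ}
    (hf : Summable f) (hf0 : ∀ i, 0 ≤ f i) (hg : Tendsto g l (𝓝 0)) (hg0 : ∀ x, 0 ≤ g x) :
    Tendsto (fun x => ∑' i, min (f i) (g x)) l (𝓝 0) := by
  have h := tendsto_tsum_of_dominated_convergence (f := fun x i => min (f i) (g x))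
    (𝓕 := l) (g := fun _ => (0 : ℝ)) hf (fun i => ?_) (.of_forall fun x i => ?_)
  · simpa using h
  · simpa [min_eq_right (hf0 i)] using (tendsto_const_nhds (x := f i)).min hg
  · rw [Real.norm_of_nonneg (le_min (hf0 i) (hg0 x))]
    exact min_le_left _ _

lemma tendsto_tsum_of_nonneg_of_le {α ι : Type*} {l : Filter α} {F G : α → ι → ℝ}
    (hF : ∀ᶠ x in l, ∀ i, 0 ≤ F x i ∧ F x i ≤ G x i) (hG : ∀ᶠ x in l, Summable (G x))
    (hG0 : Tendsto (fun x => ∑' i, G x i) l (𝓝 0)) :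
    Tendsto (fun x => ∑' i, F x i) l (𝓝 0) := by
  refine squeeze_zero' ?_ ?_ hG0
  · filter_upwards [hF] with x hx using tsum_nonneg fun i => (hx i).1
  · filter_upwards [hF, hG] with x hx hGx
    exact (hGx.of_nonneg_of_le (fun i => (hx i).1) fun i => (hx i).2).tsum_le_tsum
      (fun i => (hx i).2) hGx

theorem stmt5_general (lamτ : ℝ → ℕ → ℝ) (lam : ℕ → ℝ)
    (hposτ : ∀ τ : ℝ, 0 < τ → ∀ k, 0 < lamτ τ k)
    (hHS : Summable fun k => (1 / lam k) ^ 2)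
    (hHSτ : ∀ τ : ℝ, 0 < τ → Summable fun k => (1 / lamτ τ k) ^ 2)
    (hconv : Tendsto (fun τ : ℝ => ∑' k, (1 / lamτ τ k - 1 / lam k) ^ 2) atTop (nhds 0)) :
    Tendsto
      (fun τ : ℝ => ∑' k, (1 / (τ * (Real.exp (lamτ τ k / τ) - 1)) - 1 / lamτ τ k) ^ 2)
      atTop (nhds 0) := by
  set D : ℝ → ℕ → ℝ := fun τ k => (1 / lamτ τ k - 1 / lam k) ^ 2
  set M : ℝ → ℕ → ℝ := fun τ k => min (2 * (1 / lam k) ^ 2) ((1 / τ) ^ 2)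
  have hD : ∀ τ > 0, Summable (D τ) := fun τ hτ => (hHSτ τ hτ).sq_sub hHS
  have hM : ∀ τ, Summable (M τ) := fun τ =>
    (hHS.mul_left 2).of_nonneg_of_le (fun k => le_min (by positivity) (by positivity))
      fun k => min_le_left _ _
  have hM0 : Tendsto (fun τ => ∑' k, M τ k) atTop (𝓝 0) :=
    tendsto_tsum_min_of_summable (hHS.mul_left 2) (fun k => by positivity)
      (by simpa using (tendsto_inv_atTop_zero (𝕜 := ℝ)).pow 2) fun τ => sq_nonneg _
  refine tendsto_tsum_of_nonneg_of_le (G := fun τ k => 2 * D τ k + M τ k) ?_ ?_ ?_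
  · filter_upwards [eventually_gt_atTop 0] with τ hτ k
    exact ⟨sq_nonneg _, (sq_greenFn_sub_one_div_le_min hτ (hposτ τ hτ k)).trans
      (min_sq_le_two_mul_sq_sub_add_min _ _ _)⟩
  · filter_upwards [eventually_gt_atTop 0] with τ hτ using ((hD τ hτ).mul_left 2).add (hM τ)
  · have hsplit : ∀ᶠ τ in atTop, 2 * ∑' k, D τ k + ∑' k, M τ k = ∑' k, (2 * D τ k + M τ k) := by
      filter_upwards [eventually_gt_atTop 0] with τ hτ
      rw [((hD τ hτ).mul_left 2).tsum_add (hM τ), tsum_mul_left]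
    simpa using ((hconv.const_mul 2).add hM0).congr' hsplit

/-- Convergence of the quantum Green function to the inverse one-body Hamiltonian in
Hilbert-Schmidt norm (expressed spectrally): if the (positive) eigenvalues `lamτ τ k` of `h_τ`
and `lam k` of `h` have square-summable inverses and
`‖h_τ⁻¹ - h⁻¹‖²_{𝔖²} = ∑_k (1/lamτ τ k - 1/lam k)² → 0`, then
`‖(τ(e^{h_τ/τ} - 1))⁻¹ - h_τ⁻¹‖²_{𝔖²} → 0` as `τ → ∞`. -/
theorem stmt5 (lamτ : ℝ → ℕ → ℝ) (lam : ℕ → ℝ)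
    (hposτ : ∀ τ : ℝ, 0 < τ → ∀ k, 0 < lamτ τ k) (hpos : ∀ k, 0 < lam k)
    (hHS : Summable fun k => (1 / lam k) ^ 2)
    (hHSτ : ∀ τ : ℝ, 0 < τ → Summable fun k => (1 / lamτ τ k) ^ 2)
    (hconv : Tendsto (fun τ : ℝ => ∑' k, (1 / lamτ τ k - 1 / lam k) ^ 2) atTop (nhds 0)) :
    Tendsto
      (fun τ : ℝ => ∑' k, (1 / (τ * (Real.exp (lamτ τ k / τ) - 1)) - 1 / lamτ τ k) ^ 2)
      atTop (nhds 0) :=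
  stmt5_general lamτ lam hposτ hHS hHSτ hconv
end

section
/- Suppose h_τ and h are positive self-adjoint operators with Hilbert-Schmidt inverses such that ‖h_τ^{-1} - h^{-1}‖_{HS} → 0 as τ → ∞. Then (1/τ)·tr[(τ(e^{h_τ/τ} - 1))^{-1}] → 0 as τ → ∞. -/
open Filter Topology

/-!
Write `a_k = 1 / λ_k(τ)` and `b_k = 1 / λ_k`. The bound `eˣ - 1 ≥ x + x² / 2` gives
`τ⁻² (e^{λ/τ} - 1)⁻¹ ≤ 2 min (a/τ, a²)`. Replacing `a` by `b` in `min (a/τ, a²)` costs at most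
a multiple of `(a - b)²`, whose sum is the squared Hilbert–Schmidt distance and tends to `0`,
while `∑ min (|b|/τ, b²) → 0` by dominated convergence with the summable majorant `b²`.
-/

lemma green_denom_pos {τ μ : ℝ} (hτ : 0 < τ) (hμ : 0 < μ) :
    0 < τ * (Real.exp (μ / τ) - 1) :=
  mul_pos hτ (sub_pos.2 (Real.one_lt_exp_iff.2 (div_pos hμ hτ)))

lemma green_term_le_min {τ μ : ℝ} (hτ : 0 < τ) (hμ : 0 < μ) :
    1 / τ * (1 / (τ * (Real.exp (μ / τ) - 1))) ≤ 2 * min (1 / μ / τ) ((1 / μ) ^ 2) := by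
  have hexp := Real.quadratic_le_exp_of_nonneg (div_nonneg hμ.le hτ.le)
  have hden : τ * μ + μ ^ 2 / 2 ≤ τ * (τ * (Real.exp (μ / τ) - 1)) := by
    have := mul_le_mul_of_nonneg_left hexp (sq_nonneg τ)
    field_simp at this
    nlinarith
  rw [one_div_mul_one_div, mul_min_of_nonneg _ _ zero_le_two]
  have hτμ : 0 < τ * μ := by positivity
  refine le_min ?_ ?_
  · calc 1 / (τ * (τ * (Real.exp (μ / τ) - 1))) ≤ 1 / (τ * μ) :=
          one_div_le_one_div_of_le hτμ (by nlinarith)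
      _ ≤ 2 * (1 / μ / τ) := by rw [div_div, mul_comm μ]; linarith [one_div_pos.2 hτμ]
  · calc 1 / (τ * (τ * (Real.exp (μ / τ) - 1))) ≤ 1 / (μ ^ 2 / 2) :=
          one_div_le_one_div_of_le (by positivity) (by nlinarith)
      _ = 2 * (1 / μ) ^ 2 := by field_simp

lemma min_div_sq_le {τ x : ℝ} (hτ : 0 ≤ τ) (hx : 0 ≤ x) (y : ℝ) :
    min (x / τ) (x ^ 2) ≤ 4 * (min (|y| / τ) (y ^ 2) + (x - y) ^ 2) := by
  have hx_le : x ≤ |x - y| + |y| := by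
    simpa [abs_of_nonneg hx] using abs_sub_le x y 0
  -- either `x ≤ 2 |y|` or `x ≤ 2 |x - y|`
  rcases le_total |x - y| |y| with h | h
  · calc min (x / τ) (x ^ 2) ≤ min (4 * (|y| / τ)) (4 * y ^ 2) := by
          gcongr
          · rw [← mul_div_assoc]; gcongr; linarith [abs_nonneg y]
          · nlinarith [sq_abs y, abs_nonneg y]
      _ = 4 * min (|y| / τ) (y ^ 2) := (mul_min_of_nonneg _ _ (by norm_num)).symm
      _ ≤ _ := by nlinarith [sq_nonneg (x - y)]
  · have hmin : 0 ≤ min (|y| / τ) (y ^ 2) := le_min (by positivity) (by positivity)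
    calc min (x / τ) (x ^ 2) ≤ x ^ 2 := min_le_right _ _
      _ ≤ 4 * (x - y) ^ 2 := by nlinarith [abs_nonneg (x - y), sq_abs (x - y)]
      _ ≤ _ := by nlinarith

lemma tendsto_tsum_min_div_sq {ι : Type*} {b : ι → ℝ} (hb : Summable fun k => b k ^ 2) :
    Tendsto (fun τ : ℝ => ∑' k, min (|b k| / τ) (b k ^ 2)) atTop (𝓝 0) := by
  have h := tendsto_tsum_of_dominated_convergence (𝓕 := atTop)
    (f := fun (τ : ℝ) k => min (|b k| / τ) (b k ^ 2)) (g := fun _ => 0) hb ?_ ?_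
  · simpa using h
  · intro k
    have := (tendsto_const_nhds (x := |b k|)).div_atTop tendsto_id
    have hmin := this.min (tendsto_const_nhds (x := b k ^ 2))
    rwa [min_eq_left (sq_nonneg (b k))] at hmin
  · filter_upwards [eventually_ge_atTop 0] with τ hτ k
    rw [Real.norm_of_nonneg (le_min (by positivity) (by positivity))]
    exact min_le_right _ _

lemma summable_sub_sq {ι : Type*} {a b : ι → ℝ} (ha : Summable fun k => a k ^ 2)
    (hb : Summable fun k => b k ^ 2) : Summable fun k => (a k - b k) ^ 2 :=
  ((ha.mul_left 2).add (hb.mul_left 2)).of_nonneg_of_le (fun _ => sq_nonneg _)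
    fun k => by nlinarith [sq_nonneg (a k + b k)]

lemma tsum_green_le {ι : Type*} {τ : ℝ} (hτ : 0 < τ) {μ b : ι → ℝ} (hμ : ∀ k, 0 < μ k)
    (hμ2 : Summable fun k => (1 / μ k) ^ 2) (hb : Summable fun k => b k ^ 2) :
    1 / τ * ∑' k, 1 / (τ * (Real.exp (μ k / τ) - 1)) ≤
      8 * (∑' k, min (|b k| / τ) (b k ^ 2) + ∑' k, (1 / μ k - b k) ^ 2) := by
  have hterm : ∀ k, 1 / τ * (1 / (τ * (Real.exp (μ k / τ) - 1))) ≤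
      8 * (min (|b k| / τ) (b k ^ 2) + (1 / μ k - b k) ^ 2) := fun k =>
    calc _ ≤ 2 * min (1 / μ k / τ) ((1 / μ k) ^ 2) := green_term_le_min hτ (hμ k)
      _ ≤ 2 * (4 * (min (|b k| / τ) (b k ^ 2) + (1 / μ k - b k) ^ 2)) := by
          gcongr
          exact min_div_sq_le hτ.le (one_div_pos.2 (hμ k)).le (b k)
      _ = _ := by ring
  have hmin : Summable fun k => min (|b k| / τ) (b k ^ 2) :=
    hb.of_nonneg_of_le (fun _ => le_min (by positivity) (by positivity)) fun _ => min_le_right _ _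
  have hsub := summable_sub_sq hμ2 hb
  have hmajorant := (hmin.add hsub).mul_left 8
  rw [← tsum_mul_left, ← hmin.tsum_add hsub, ← tsum_mul_left]
  refine Summable.tsum_le_tsum hterm (hmajorant.of_nonneg_of_le (fun k => ?_) hterm) hmajorant
  have := green_denom_pos hτ (hμ k)
  positivity

theorem stmt6_general (lamτ : ℝ → ℕ → ℝ) (lam : ℕ → ℝ)
    (hposτ : ∀ τ : ℝ, 0 < τ → ∀ k, 0 < lamτ τ k)
    (hHS : Summable fun k => (1 / lam k) ^ 2)
    (hHSτ : ∀ τ : ℝ, 0 < τ → Summable fun k => (1 / lamτ τ k) ^ 2)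
    (hconv : Tendsto (fun τ : ℝ => ∑' k, (1 / lamτ τ k - 1 / lam k) ^ 2) atTop (nhds 0)) :
    Tendsto
      (fun τ : ℝ => (1 / τ) * ∑' k, 1 / (τ * (Real.exp (lamτ τ k / τ) - 1)))
      atTop (nhds 0) := by
  have hmajorant := ((tendsto_tsum_min_div_sq hHS).add hconv).const_mul 8
  rw [add_zero, mul_zero] at hmajorant
  refine tendsto_of_tendsto_of_tendsto_of_le_of_le' tendsto_const_nhds hmajorant ?_ ?_ <;>
    filter_upwards [eventually_gt_atTop 0] with τ hτ
  · exact mul_nonneg (by positivity) (tsum_nonneg fun k =>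
      (one_div_pos.2 (green_denom_pos hτ (hposτ τ hτ k))).le)
  · exact tsum_green_le hτ (hposτ τ hτ) (hHSτ τ hτ) hHS

/-- If the (positive) eigenvalues `lamτ τ k` of `h_τ` and `lam k` of `h` have square-summable
inverses and `‖h_τ⁻¹ - h⁻¹‖²_{𝔖²} = ∑_k (1/lamτ τ k - 1/lam k)² → 0`, then the trace of the
quantum Green function grows slower than `τ`:
`(1/τ) · tr (τ(e^{h_τ/τ} - 1))⁻¹ → 0` as `τ → ∞`. -/
theorem stmt6 (lamτ : ℝ → ℕ → ℝ) (lam : ℕ → ℝ)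
    (hposτ : ∀ τ : ℝ, 0 < τ → ∀ k, 0 < lamτ τ k) (hpos : ∀ k, 0 < lam k)
    (hHS : Summable fun k => (1 / lam k) ^ 2)
    (hHSτ : ∀ τ : ℝ, 0 < τ → Summable fun k => (1 / lamτ τ k) ^ 2)
    (hconv : Tendsto (fun τ : ℝ => ∑' k, (1 / lamτ τ k - 1 / lam k) ^ 2) atTop (nhds 0)) :
    Tendsto
      (fun τ : ℝ => (1 / τ) * ∑' k, 1 / (τ * (Real.exp (lamτ τ k / τ) - 1)))
      atTop (nhds 0) :=
  stmt6_general lamτ lam hposτ hHS hHSτ hconv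
end

section
/- Suppose h_τ and h are positive self-adjoint operators with Hilbert-Schmidt inverses and ‖h_τ^{-1} - h^{-1}‖_{HS} → 0 as τ → ∞. Then, uniformly in t ∈ (0, 1), one has (t/τ)·‖e^{-t h_τ/τ}‖_{HS} → 0 as τ → ∞. -/
open Filter Topology

/-!
Since `e^{-x} ≤ 1` and `x e^{-x} ≤ 1`, every term `(t/τ)² e^{-2tλ/τ}` is at most
`min (τ⁻², λ⁻²)`, uniformly in `t ∈ (0, 1]`. With `a = λ_τ⁻¹` and `b = λ⁻¹`,
`min (τ⁻², a²) ≤ 2 (a - b)² + 2 min (τ⁻², b²)`: the first part sums to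
`‖h_τ⁻¹ - h⁻¹‖²_{𝔖²} → 0`, the second tends to `0` by dominated convergence with dominant `b²`.
-/

lemma tendstoUniformlyOn_zero_of_abs_le {ι α : Type*} {l : Filter ι} {s : Set α}
    {F : ι → α → ℝ} {g : ι → ℝ} (hg : Tendsto g l (𝓝 0))
    (hF : ∀ᶠ i in l, ∀ x ∈ s, |F i x| ≤ g i) :
    TendstoUniformlyOn F (fun _ => 0) l s := by
  rw [Metric.tendstoUniformlyOn_iff]
  intro ε hε
  filter_upwards [hF, (tendsto_order.1 hg).2 ε hε] with i hFi hgi x hx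
  rw [dist_comm, Real.dist_0_eq_abs]
  exact (hFi x hx).trans_lt hgi

lemma Real.mul_exp_neg_le_one (x : ℝ) : x * Real.exp (-x) ≤ 1 := by
  rw [Real.exp_neg, ← div_eq_mul_inv, div_le_one (Real.exp_pos x)]
  linarith [Real.add_one_le_exp x]

section HeatKernel

variable {t τ μ : ℝ}

lemma div_mul_exp_neg_le_one_div_denom (hτ : 0 < τ) (hμ : 0 ≤ μ) (ht₀ : 0 ≤ t) (ht₁ : t ≤ 1) :
    t / τ * Real.exp (-(t * μ / τ)) ≤ 1 / τ := by
  have hexp : Real.exp (-(t * μ / τ)) ≤ 1 := Real.exp_le_one_iff.2 (neg_nonpos.2 (by positivity))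
  calc t / τ * Real.exp (-(t * μ / τ)) ≤ 1 / τ * 1 := by gcongr
    _ = 1 / τ := mul_one _

lemma div_mul_exp_neg_le_one_div_rate (hμ : 0 < μ) :
    t / τ * Real.exp (-(t * μ / τ)) ≤ 1 / μ := by
  have h := Real.mul_exp_neg_le_one (t * μ / τ)
  calc t / τ * Real.exp (-(t * μ / τ)) = 1 / μ * (t * μ / τ * Real.exp (-(t * μ / τ))) := by
        field_simp
    _ ≤ 1 / μ := mul_le_of_le_one_right (by positivity) h

lemma sq_div_mul_exp_neg_two_le_min (hτ : 0 < τ) (hμ : 0 < μ) (ht₀ : 0 ≤ t) (ht₁ : t ≤ 1) :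
    (t / τ) ^ 2 * Real.exp (-(2 * t * μ / τ)) ≤ min ((1 / τ) ^ 2) ((1 / μ) ^ 2) := by
  have hsq : (t / τ) ^ 2 * Real.exp (-(2 * t * μ / τ)) = (t / τ * Real.exp (-(t * μ / τ))) ^ 2 := by
    rw [mul_pow, ← Real.exp_nat_mul]
    ring_nf
  have hnn : 0 ≤ t / τ * Real.exp (-(t * μ / τ)) := by positivity
  rw [hsq]
  exact le_min (pow_le_pow_left₀ hnn (div_mul_exp_neg_le_one_div_denom hτ hμ.le ht₀ ht₁) 2)
    (pow_le_pow_left₀ hnn (div_mul_exp_neg_le_one_div_rate hμ) 2)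

end HeatKernel

lemma min_sq_le_two_mul_sub_sq_add (c a b : ℝ) :
    min (c ^ 2) (a ^ 2) ≤ 2 * (a - b) ^ 2 + 2 * min (c ^ 2) (b ^ 2) := by
  rcases min_cases (c ^ 2) (b ^ 2) with ⟨h, -⟩ | ⟨h, -⟩ <;> rw [h]
  · nlinarith [min_le_left (c ^ 2) (a ^ 2), sq_nonneg (a - b), sq_nonneg c]
  · nlinarith [min_le_right (c ^ 2) (a ^ 2), sq_nonneg (a - 2 * b)]

section MinSq

variable {ι : Type*} {l : Filter ι} {c : ι → ℝ} {b : ℕ → ℝ}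

lemma tendsto_tsum_min_sq (hc : Tendsto c l (𝓝 0)) (hb : Summable fun k => b k ^ 2) :
    Tendsto (fun i => ∑' k, min (c i ^ 2) (b k ^ 2)) l (𝓝 0) := by
  have hc2 : Tendsto (fun i => c i ^ 2) l (𝓝 0) := by simpa using hc.pow 2
  have hlim : ∀ k, Tendsto (fun i => min (c i ^ 2) (b k ^ 2)) l (𝓝 0) := fun k => by
    have h := hc2.min (tendsto_const_nhds (x := b k ^ 2))
    rwa [min_eq_left (sq_nonneg (b k))] at h
  simpa using tendsto_tsum_of_dominated_convergence hb hlim (.of_forall fun i k => by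
    rw [Real.norm_of_nonneg (by positivity)]
    exact min_le_right _ _)

lemma tendsto_tsum_min_sq_of_tendsto_tsum_sub_sq {a : ι → ℕ → ℝ} (hc : Tendsto c l (𝓝 0))
    (hb : Summable fun k => b k ^ 2) (ha : ∀ᶠ i in l, Summable fun k => a i k ^ 2)
    (hab : Tendsto (fun i => ∑' k, (a i k - b k) ^ 2) l (𝓝 0)) :
    Tendsto (fun i => ∑' k, min (c i ^ 2) (a i k ^ 2)) l (𝓝 0) := by
  have hbound := (hab.const_mul 2).add ((tendsto_tsum_min_sq hc hb).const_mul 2)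
  rw [mul_zero, add_zero] at hbound
  refine tendsto_of_tendsto_of_tendsto_of_le_of_le' tendsto_const_nhds hbound
    (.of_forall fun i => tsum_nonneg fun k => by positivity) ?_
  filter_upwards [ha] with i hai
  have hsub : Summable fun k => (a i k - b k) ^ 2 :=
    .of_nonneg_of_le (fun k => sq_nonneg _)
      (fun k => by nlinarith [sq_nonneg (a i k + b k)]) ((hai.add hb).mul_left 2)
  have hmin : Summable fun k => min (c i ^ 2) (b k ^ 2) :=
    .of_nonneg_of_le (fun k => by positivity) (fun k => min_le_right _ _) hb
  rw [← tsum_mul_left, ← tsum_mul_left, ← (hsub.mul_left 2).tsum_add (hmin.mul_left 2)]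
  exact Summable.tsum_le_tsum (fun k => min_sq_le_two_mul_sub_sq_add _ _ _)
    (.of_nonneg_of_le (fun k => by positivity) (fun k => min_le_right _ _) hai)
    ((hsub.mul_left 2).add (hmin.mul_left 2))

end MinSq

lemma div_mul_sqrt_tsum_exp_neg_le {t τ : ℝ} {μ : ℕ → ℝ} (hμ : ∀ k, 0 < μ k)
    (hμs : Summable fun k => (1 / μ k) ^ 2) (hτ : 0 < τ) (ht₀ : 0 ≤ t) (ht₁ : t ≤ 1) :
    t / τ * √(∑' k, Real.exp (-(2 * t * μ k / τ))) ≤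
      √(∑' k, min ((1 / τ) ^ 2) ((1 / μ k) ^ 2)) := by
  have hbound k := sq_div_mul_exp_neg_two_le_min hτ (hμ k) ht₀ ht₁
  rw [← Real.sqrt_sq (by positivity : 0 ≤ t / τ), ← Real.sqrt_mul (by positivity),
    ← tsum_mul_left]
  have hmin : Summable fun k => min ((1 / τ) ^ 2) ((1 / μ k) ^ 2) :=
    .of_nonneg_of_le (fun k => by positivity) (fun k => min_le_right _ _) hμs
  exact Real.sqrt_le_sqrt <| Summable.tsum_le_tsum hbound
    (.of_nonneg_of_le (fun k => by positivity) hbound hmin) hmin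

theorem stmt7_general (lamτ : ℝ → ℕ → ℝ) (lam : ℕ → ℝ)
    (hposτ : ∀ τ : ℝ, 0 < τ → ∀ k, 0 < lamτ τ k)
    (hHS : Summable fun k => (1 / lam k) ^ 2)
    (hHSτ : ∀ τ : ℝ, 0 < τ → Summable fun k => (1 / lamτ τ k) ^ 2)
    (hconv : Tendsto (fun τ : ℝ => ∑' k, (1 / lamτ τ k - 1 / lam k) ^ 2) atTop (nhds 0)) :
    TendstoUniformlyOn
      (fun τ : ℝ => fun t : ℝ =>
        (t / τ) * Real.sqrt (∑' k, Real.exp (-(2 * t * lamτ τ k / τ))))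
      (fun _ => 0) atTop (Set.Ioo 0 1) := by
  have hinv : Tendsto (fun τ : ℝ => 1 / τ) atTop (𝓝 0) :=
    tendsto_const_nhds.div_atTop tendsto_id
  have hmin := tendsto_tsum_min_sq_of_tendsto_tsum_sub_sq hinv hHS
    ((eventually_gt_atTop 0).mono hHSτ) hconv
  have hsqrt := hmin.sqrt
  rw [Real.sqrt_zero] at hsqrt
  refine tendstoUniformlyOn_zero_of_abs_le hsqrt ?_
  filter_upwards [eventually_gt_atTop 0] with τ hτ t ⟨ht₀, ht₁⟩
  rw [abs_of_nonneg (by positivity)]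
  exact div_mul_sqrt_tsum_exp_neg_le (hposτ τ hτ) (hHSτ τ hτ) hτ ht₀.le ht₁.le

/-- If the (positive) eigenvalues `lamτ τ k` of `h_τ` and `lam k` of `h` have square-summable
inverses and `∑_k (1/lamτ τ k - 1/lam k)² → 0`, then, uniformly in `t ∈ (0,1)`,
`(t/τ) · ‖e^{-t h_τ/τ}‖_{𝔖²} → 0` as `τ → ∞`, where
`‖e^{-t h_τ/τ}‖_{𝔖²} = (∑_k e^{-2 t lamτ τ k/τ})^{1/2}`. -/
theorem stmt7 (lamτ : ℝ → ℕ → ℝ) (lam : ℕ → ℝ)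
    (hposτ : ∀ τ : ℝ, 0 < τ → ∀ k, 0 < lamτ τ k) (hpos : ∀ k, 0 < lam k)
    (hHS : Summable fun k => (1 / lam k) ^ 2)
    (hHSτ : ∀ τ : ℝ, 0 < τ → Summable fun k => (1 / lamτ τ k) ^ 2)
    (hconv : Tendsto (fun τ : ℝ => ∑' k, (1 / lamτ τ k - 1 / lam k) ^ 2) atTop (nhds 0)) :
    TendstoUniformlyOn
      (fun τ : ℝ => fun t : ℝ =>
        (t / τ) * Real.sqrt (∑' k, Real.exp (-(2 * t * lamτ τ k / τ))))
      (fun _ => 0) atTop (Set.Ioo 0 1) :=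
  stmt7_general lamτ lam hposτ hHS hHSτ hconv
end

section
/- (Stability of Borel summation) Let R ≥ 1, σ ≥ 1, ν > 0. Suppose A and A_τ (τ > 0) are analytic on C_R = {z : Re z^{-1} > R^{-1}} with asymptotic expansions A(z) = ∑_{m<M} a_m z^m + R_M(z) and A_τ(z) = ∑_{m<M} a_{τ,m} z^m + R_{τ,M}(z), where |a_m|, |a_{τ,m}| ≤ ν σ^m m! and |R_M(z)|, |R_{τ,M}(z)| ≤ ν σ^M M! |z|^M on C_R, all uniformly in τ. If a_{τ,m} → a_m as τ → ∞ for every m, then A_τ(z) → A(z) for every z ∈ C_R. -/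
/-!
Along any ultrafilter finer than `atTop` the `A_τ`, which are uniformly bounded on `C_R` by
their expansion of order one, converge pointwise; Cauchy estimates make the convergence locally
uniform, so the limit `g` is holomorphic, and it inherits the expansion with coefficients `a_m`
and the same remainder bounds. It remains to see that `g = A` (Watson's uniqueness theorem).
The difference `D = g - A` satisfies `‖D z‖ ≤ 2ν σ^M M! ‖z‖^M` for every `M`; optimising in `M`
gives `‖D z‖ ≤ 4ν exp(-1/(4σ‖z‖))`. So `G(ζ) = D(1/(w + ζ))`, for `w` in the half-plane
`1/R < re w` that is the image of `C_R` under `z ↦ 1/z`, decays like `exp(-δ‖ζ‖)` on the right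
half-plane. Phragmén–Lindelöf applied to `G(ζ^a) exp(c ζ^a - ε ζ)`, with `a < 1` chosen so that
`c cos(aπ/2) ≤ δ`, upgrades this to the decay `exp(-c u)` along the real axis for every `c`,
which forces `G = 0` there.
-/

open Filter Topology Metric Set Real

def borelDisk (R : ℝ) : Set ℂ := {z : ℂ | 1 / R < (1 / z).re}

section BorelDisk

variable {R : ℝ} {z : ℂ}

theorem ne_zero_of_mem_borelDisk (hR : 0 < R) (hz : z ∈ borelDisk R) : z ≠ 0 := by
  rintro rfl
  have : 0 < 1 / R := by positivity
  simp only [borelDisk, mem_ofPred_eq, div_zero, Complex.zero_re] at hz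
  linarith

theorem norm_lt_of_mem_borelDisk (hR : 0 < R) (hz : z ∈ borelDisk R) : ‖z‖ < R := by
  have hz0 : 0 < ‖z‖ := norm_pos_iff.2 (ne_zero_of_mem_borelDisk hR hz)
  have h : 1 / R < 1 / ‖z‖ := calc
    1 / R < (1 / z).re := hz
    _ ≤ ‖1 / z‖ := Complex.re_le_norm _
    _ = 1 / ‖z‖ := by rw [norm_div, norm_one]
  exact (one_div_lt_one_div hR hz0).1 h

theorem inv_mem_borelDisk {w : ℂ} (hw : 1 / R < w.re) : w⁻¹ ∈ borelDisk R := by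
  show 1 / R < (1 / w⁻¹).re
  rwa [one_div w⁻¹, inv_inv]

theorem isOpen_borelDisk (hR : 0 < R) : IsOpen (borelDisk R) := by
  refine isOpen_iff_mem_nhds.2 fun z hz => ?_
  have hcont : ContinuousAt (fun w : ℂ => (1 / w).re) z :=
    Complex.continuous_re.continuousAt.comp
      (continuousAt_const.div continuousAt_id (ne_zero_of_mem_borelDisk hR hz))
  exact continuousAt_const.eventually_lt hcont hz

end BorelDisk

theorem le_two_mul_exp_neg_of_le_factorial_mul_pow {y t K : ℝ} (hy : 0 ≤ y) (ht : 0 < t)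
    (h : ∀ M : ℕ, y ≤ K * M.factorial * t ^ M) : y ≤ 2 * K * exp (-(4 * t)⁻¹) := by
  have hK : 0 ≤ K := hy.trans (by simpa using h 0)
  set M := ⌊(2 * t)⁻¹⌋₊
  have hMt : M * t ≤ 1 / 2 := calc
    M * t ≤ (2 * t)⁻¹ * t := by gcongr; exact Nat.floor_le (by positivity)
    _ = 1 / 2 := by field_simp
  have hM : (4 * t)⁻¹ < (M + 1) / 2 := by
    have := Nat.lt_floor_add_one (2 * t)⁻¹
    rw [mul_comm 4 t, show (t * 4)⁻¹ = (2 * t)⁻¹ / 2 by field_simp; ring]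
    linarith
  have hfact : (M.factorial : ℝ) * t ^ M ≤ (1 / 2) ^ M := calc
    (M.factorial : ℝ) * t ^ M ≤ (M : ℝ) ^ M * t ^ M := by
      gcongr; exact_mod_cast Nat.factorial_le_pow M
    _ = (M * t) ^ M := (mul_pow _ _ _).symm
    _ ≤ (1 / 2) ^ M := by gcongr
  have hhalf : (1 / 2 : ℝ) ^ M ≤ 2 * exp (-(4 * t)⁻¹) := calc
    (1 / 2 : ℝ) ^ M = 2 * (1 / 2) ^ (M + 1) := by ring
    _ ≤ 2 * exp (-(1 / 2)) ^ (M + 1) := by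
      gcongr; linarith [add_one_le_exp (-(1 / 2))]
    _ = 2 * exp (-((M + 1) / 2)) := by rw [← exp_nat_mul]; push_cast; ring_nf
    _ ≤ 2 * exp (-(4 * t)⁻¹) := by gcongr
  calc y ≤ K * M.factorial * t ^ M := h M
    _ ≤ K * (1 / 2) ^ M := by rw [mul_assoc]; gcongr
    _ ≤ K * (2 * exp (-(4 * t)⁻¹)) := by gcongr
    _ = 2 * K * exp (-(4 * t)⁻¹) := by ring

section ComplexPower

variable {a : ℝ}

theorem abs_arg_mul_le (ζ : ℂ) (ha0 : 0 ≤ a) (ha1 : a ≤ 1) :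
    |Complex.arg ζ * a| ≤ |Complex.arg ζ| := by
  rw [abs_mul, abs_of_nonneg ha0]
  exact mul_le_of_le_one_right (abs_nonneg _) ha1

theorem re_cpow_nonneg {ζ : ℂ} (ha0 : 0 ≤ a) (ha1 : a ≤ 1) (hζ : 0 ≤ ζ.re) :
    0 ≤ (ζ ^ (a : ℂ)).re := by
  rw [Complex.cpow_ofReal_re]
  refine mul_nonneg (rpow_nonneg (norm_nonneg _) _) (cos_nonneg_of_mem_Icc (abs_le.1 ?_))
  exact (abs_arg_mul_le ζ ha0 ha1).trans (Complex.abs_arg_le_pi_div_two_iff.2 hζ)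

theorem re_cpow_pos {ζ : ℂ} (ha0 : 0 ≤ a) (ha1 : a ≤ 1) (hζ : 0 < ζ.re) :
    0 < (ζ ^ (a : ℂ)).re := by
  have hζ0 : ζ ≠ 0 := by rintro rfl; simp at hζ
  rw [Complex.cpow_ofReal_re]
  refine mul_pos (rpow_pos_of_pos (norm_pos_iff.2 hζ0) _) (cos_pos_of_mem_Ioo (abs_lt.1 ?_))
  exact (abs_arg_mul_le ζ ha0 ha1).trans_lt (Complex.abs_arg_lt_pi_div_two_iff.2 (Or.inl hζ))

theorem re_ofReal_mul_I_cpow (ha : 0 < a) (y : ℝ) :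
    (((y : ℂ) * Complex.I) ^ (a : ℂ)).re = |y| ^ a * cos (a * (π / 2)) := by
  have hnorm : ‖(y : ℂ) * Complex.I‖ = |y| := by simp
  rcases lt_trichotomy y 0 with hy | rfl | hy
  · have harg : Complex.arg ((y : ℂ) * Complex.I) = -(π / 2) :=
      Complex.arg_eq_neg_pi_div_two_iff.2 ⟨by simp, by simpa using hy⟩
    rw [Complex.cpow_ofReal_re, hnorm, harg, neg_mul, cos_neg, mul_comm (π / 2)]
  · simp [Complex.zero_cpow (Complex.ofReal_ne_zero.2 ha.ne'), zero_rpow ha.ne']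
  · have harg : Complex.arg ((y : ℂ) * Complex.I) = π / 2 :=
      Complex.arg_eq_pi_div_two_iff.2 ⟨by simp, by simpa using hy⟩
    rw [Complex.cpow_ofReal_re, hnorm, harg, mul_comm (π / 2)]

theorem diffContOnCl_cpow (ha : 0 < a) :
    DiffContOnCl ℂ (fun ζ : ℂ => ζ ^ (a : ℂ)) {ζ | 0 < ζ.re} := by
  refine ⟨fun ζ hζ => ?_, fun ζ hζ => ?_⟩
  · exact (differentiableAt_id.cpow (differentiableAt_const _)
      (Complex.mem_slitPlane_iff.2 (Or.inl hζ))).differentiableWithinAt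
  · rw [Complex.closure_setOfPred_lt_re] at hζ
    exact (Complex.continuousAt_cpow_const_of_re_pos (Or.inl hζ)
      (by simpa using ha)).continuousWithinAt

end ComplexPower

theorem tendsto_mul_rpow_sub_mul_atBot {a c ε : ℝ} (ha : a < 1) (hε : 0 < ε) :
    Tendsto (fun x : ℝ => c * x ^ a - ε * x) atTop atBot := by
  have h : Tendsto (fun x : ℝ => c * x ^ (a - 1) - ε) atTop (𝓝 (-ε)) := by
    have := ((tendsto_rpow_neg_atTop (by linarith : 0 < 1 - a)).const_mul c).sub_const ε
    simpa using this
  refine (tendsto_id.atTop_mul_neg (neg_lt_zero.2 hε) h).congr' ?_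
  filter_upwards [eventually_gt_atTop 0] with x hx
  rw [rpow_sub_one hx.ne']
  field_simp
  simp

section RightHalfPlane

variable {G : ℂ → ℂ} {C δ : ℝ}

theorem norm_comp_cpow_mul_exp_le (hG : DiffContOnCl ℂ G {ζ | 0 < ζ.re})
    (hdecay : ∀ ζ : ℂ, 0 ≤ ζ.re → ‖G ζ‖ ≤ C * exp (-(δ * ‖ζ‖)))
    {a c ε : ℝ} (ha0 : 0 < a) (ha1 : a < 1) (hc : 0 ≤ c) (hca : c * cos (a * (π / 2)) ≤ δ)
    (hε : 0 < ε) {x : ℝ} (hx : 0 ≤ x) :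
    ‖G (x ^ a : ℝ)‖ * exp (c * x ^ a - ε * x) ≤ C := by
  -- On the imaginary axis `ζ ^ a` lies on the rays `arg = ± aπ/2`, where `exp (c * ζ ^ a)`
  -- grows at most like `exp (δ ‖ζ ^ a‖)`; the factor `exp (-ε ζ)` makes `F` vanish at `+∞`.
  set F : ℂ → ℂ := fun ζ => G (ζ ^ (a : ℂ)) * Complex.exp (c * ζ ^ (a : ℂ) - ε * ζ)
  have hnormF : ∀ ζ, ‖F ζ‖ = ‖G (ζ ^ (a : ℂ))‖ * exp (c * (ζ ^ (a : ℂ)).re - ε * ζ.re) := by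
    intro ζ
    simp [F, Complex.norm_exp]
  have hC : 0 ≤ C := by simpa using (norm_nonneg _).trans (hdecay 0 le_rfl)
  have hδ : 0 ≤ δ := le_trans (mul_nonneg hc (cos_nonneg_of_mem_Icc
    ⟨by nlinarith [pi_pos], by nlinarith [pi_pos]⟩)) hca
  have hbdd : ∀ ζ : ℂ, 0 ≤ ζ.re → ‖G ζ‖ ≤ C := fun ζ hζ =>
    (hdecay ζ hζ).trans (mul_le_of_le_one_right hC
      (exp_le_one_iff.2 (neg_nonpos.2 (by positivity))))
  have hFd : DiffContOnCl ℂ F {ζ | 0 < ζ.re} := by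
    have hcpow := diffContOnCl_cpow ha0
    have hGa : DiffContOnCl ℂ (fun ζ => G (ζ ^ (a : ℂ))) {ζ | 0 < ζ.re} :=
      hG.comp hcpow fun ζ hζ => re_cpow_pos ha0.le ha1.le hζ
    have hE : DiffContOnCl ℂ (fun ζ : ℂ => Complex.exp (c * ζ ^ (a : ℂ) - ε * ζ))
        {ζ | 0 < ζ.re} :=
      Complex.differentiable_exp.comp_diffContOnCl
        ((hcpow.const_smul (c : ℂ)).sub (differentiable_id.diffContOnCl.const_smul (ε : ℂ)))
    exact hGa.smul hE
  have hgrowth : ∃ b < (2 : ℝ), ∃ B,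
      F =O[Bornology.cobounded ℂ ⊓ 𝓟 {ζ | 0 < ζ.re}] fun ζ => exp (B * ‖ζ‖ ^ b) := by
    refine ⟨1, one_lt_two, c + ε, Asymptotics.IsBigO.of_bound C ?_⟩
    have hlarge : ∀ᶠ ζ : ℂ in Bornology.cobounded ℂ, 1 ≤ ‖ζ‖ :=
      tendsto_norm_cobounded_atTop.eventually_ge_atTop 1
    filter_upwards [mem_inf_of_left hlarge, mem_inf_of_right (mem_principal_self _)] with ζ h1 hre
    have hpow : (ζ ^ (a : ℂ)).re ≤ ‖ζ‖ := calc
      (ζ ^ (a : ℂ)).re ≤ ‖ζ ^ (a : ℂ)‖ := Complex.re_le_norm _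
      _ = ‖ζ‖ ^ a := Complex.norm_cpow_real _ _
      _ ≤ ‖ζ‖ ^ (1 : ℝ) := rpow_le_rpow_of_exponent_le h1 ha1.le
      _ = ‖ζ‖ := rpow_one _
    have hre' : 0 ≤ ζ.re := le_of_lt hre
    rw [hnormF, rpow_one, Real.norm_eq_abs, abs_exp]
    refine mul_le_mul (hbdd _ (re_cpow_nonneg ha0.le ha1.le hre')) (exp_le_exp.2 ?_)
      (exp_pos _).le hC
    nlinarith [norm_nonneg ζ]
  have hreal : Tendsto (fun x : ℝ => F x) atTop (𝓝 0) := by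
    have hlim : Tendsto (fun x : ℝ => C * exp (c * x ^ a - ε * x)) atTop (𝓝 0) := by
      simpa using (tendsto_exp_atBot.comp (tendsto_mul_rpow_sub_mul_atBot ha1 hε)).const_mul C
    refine squeeze_zero_norm' ?_ hlim
    filter_upwards [eventually_ge_atTop 0] with x hx
    rw [hnormF, ← Complex.ofReal_cpow hx, Complex.ofReal_re, Complex.ofReal_re]
    exact mul_le_mul_of_nonneg_right (hbdd _ (by simpa using rpow_nonneg hx a)) (exp_pos _).le
  have him : ∀ y : ℝ, ‖F (y * Complex.I)‖ ≤ C := by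
    intro y
    have hy : ‖((y : ℂ) * Complex.I) ^ (a : ℂ)‖ = |y| ^ a := by
      rw [Complex.norm_cpow_real]; simp
    have hG' := hdecay _ (re_cpow_nonneg ha0.le ha1.le (ζ := y * Complex.I) (by simp))
    rw [hy] at hG'
    calc ‖F (y * Complex.I)‖
        = ‖G (((y : ℂ) * Complex.I) ^ (a : ℂ))‖ * exp (c * (|y| ^ a * cos (a * (π / 2)))) := by
          rw [hnormF, re_ofReal_mul_I_cpow ha0]; simp
      _ ≤ C * exp (-(δ * |y| ^ a)) * exp (c * (|y| ^ a * cos (a * (π / 2)))) := by gcongr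
      _ = C * exp ((c * cos (a * (π / 2)) - δ) * |y| ^ a) := by
          rw [mul_assoc, ← exp_add]; ring_nf
      _ ≤ C * 1 := by
          gcongr
          exact exp_le_one_iff.2 (mul_nonpos_of_nonpos_of_nonneg (by linarith)
            (rpow_nonneg (abs_nonneg y) a))
      _ = C := mul_one C
  have := PhragmenLindelof.right_half_plane_of_tendsto_zero_on_real hFd hgrowth hreal him
    (z := x) (by simpa using hx)
  rwa [hnormF, ← Complex.ofReal_cpow hx, Complex.ofReal_re, Complex.ofReal_re] at this

theorem norm_ofReal_le_mul_exp_neg (hG : DiffContOnCl ℂ G {ζ | 0 < ζ.re})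
    (hdecay : ∀ ζ : ℂ, 0 ≤ ζ.re → ‖G ζ‖ ≤ C * exp (-(δ * ‖ζ‖)))
    (hδ : 0 < δ) {c : ℝ} (hc : δ ≤ c) {u : ℝ} (hu : 0 ≤ u) : ‖G u‖ ≤ C * exp (-(c * u)) := by
  have hc0 : 0 < c := hδ.trans_le hc
  -- `a` is chosen so that `c * cos (a * π / 2) = c * sin (δ / c) ≤ δ`
  set a := 1 - 2 * δ / (π * c)
  have hfrac : 2 * δ / (π * c) < 1 := by
    rw [div_lt_one (by positivity)]; nlinarith [pi_gt_three]
  have ha0 : 0 < a := by linarith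
  have ha1 : a < 1 := by
    have : 0 < 2 * δ / (π * c) := by positivity
    linarith
  have hca : c * cos (a * (π / 2)) ≤ δ := by
    have : a * (π / 2) = π / 2 - δ / c := by simp only [a]; field_simp
    rw [this, cos_pi_div_two_sub]
    calc c * sin (δ / c) ≤ c * (δ / c) := by gcongr; exact sin_le (by positivity)
      _ = δ := by field_simp
  set x := u ^ a⁻¹
  have hx : 0 ≤ x := rpow_nonneg hu _
  have hxa : x ^ a = u := rpow_inv_rpow hu ha0.ne'
  have hε : ∀ ε > 0, ‖G u‖ * exp (c * u) ≤ C * exp (ε * x) := by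
    intro ε hε
    have := norm_comp_cpow_mul_exp_le hG hdecay ha0 ha1 hc0.le hca hε hx
    rw [hxa, sub_eq_add_neg, exp_add, ← mul_assoc, ← le_div_iff₀ (exp_pos _), exp_neg,
      div_inv_eq_mul] at this
    exact this
  have hlim : Tendsto (fun ε => C * exp (ε * x)) (𝓝[>] 0) (𝓝 C) := by
    have : Continuous fun ε => C * exp (ε * x) := by fun_prop
    simpa using (this.tendsto 0).mono_left nhdsWithin_le_nhds
  have := ge_of_tendsto hlim (eventually_nhdsWithin_of_forall hε)
  rwa [exp_neg, ← div_eq_mul_inv, le_div_iff₀ (exp_pos _)]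

theorem apply_ofReal_eq_zero (hG : DiffContOnCl ℂ G {ζ | 0 < ζ.re})
    (hdecay : ∀ ζ : ℂ, 0 ≤ ζ.re → ‖G ζ‖ ≤ C * exp (-(δ * ‖ζ‖)))
    (hδ : 0 < δ) {u : ℝ} (hu : 0 < u) : G u = 0 := by
  have hlim : Tendsto (fun c => C * exp (-(c * u))) atTop (𝓝 0) := by
    simpa using (tendsto_exp_atBot.comp
      (tendsto_neg_atTop_atBot.comp (tendsto_id.atTop_mul_const hu))).const_mul C
  exact norm_le_zero_iff.1 (ge_of_tendsto hlim ((eventually_ge_atTop δ).mono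
    fun c hc => norm_ofReal_le_mul_exp_neg hG hdecay hδ hc hu.le))

end RightHalfPlane

theorem eqOn_zero_of_norm_le_factorial_mul_pow {R σ K : ℝ} {D : ℂ → ℂ} (hR : 0 < R) (hσ : 0 < σ)
    (hD : DifferentiableOn ℂ D (borelDisk R))
    (hbd : ∀ M : ℕ, ∀ z ∈ borelDisk R, ‖D z‖ ≤ K * σ ^ M * M.factorial * ‖z‖ ^ M) :
    EqOn D 0 (borelDisk R) := by
  intro z hz
  have hK : 0 ≤ K := (norm_nonneg _).trans (by simpa using hbd 0 z hz)
  -- `1 / z = w + u` with `u > 0` real and `w` still inside the half-plane `1 / R < re`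
  set u := ((1 / z).re - 1 / R) / 2
  have hu : 0 < u := by
    have : 1 / R < (1 / z).re := hz
    simp only [u]; linarith
  set w := 1 / z - u
  have hmem : ∀ ζ : ℂ, 0 ≤ ζ.re → (w + ζ)⁻¹ ∈ borelDisk R := fun ζ hζ => by
    have : 1 / R < (1 / z).re := hz
    refine inv_mem_borelDisk ?_
    simp only [w, Complex.add_re, Complex.sub_re, Complex.ofReal_re, u]
    linarith
  have hne : ∀ ζ : ℂ, 0 ≤ ζ.re → w + ζ ≠ 0 := fun ζ hζ => by
    simpa using ne_zero_of_mem_borelDisk hR (hmem ζ hζ)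
  set δ := (4 * σ)⁻¹
  have hdecay : ∀ ζ : ℂ, 0 ≤ ζ.re →
      ‖D (w + ζ)⁻¹‖ ≤ 2 * K * exp (δ * ‖w‖) * exp (-(δ * ‖ζ‖)) := by
    intro ζ hζ
    have h := le_two_mul_exp_neg_of_le_factorial_mul_pow (norm_nonneg _)
      (t := σ * ‖(w + ζ)⁻¹‖) (mul_pos hσ (norm_pos_iff.2 (inv_ne_zero (hne ζ hζ)))) fun M => by
        rw [mul_pow, ← mul_assoc, mul_right_comm K]; exact hbd M _ (hmem ζ hζ)
    calc ‖D (w + ζ)⁻¹‖ ≤ 2 * K * exp (-(4 * (σ * ‖(w + ζ)⁻¹‖))⁻¹) := h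
      _ = 2 * K * exp (-(δ * ‖w + ζ‖)) := by simp only [δ]; rw [norm_inv]; field_simp
      _ ≤ 2 * K * exp (-(δ * (‖ζ‖ - ‖w‖))) := by
          have := norm_sub_norm_le ζ (-w)
          rw [norm_neg, sub_neg_eq_add, add_comm] at this
          gcongr
      _ = 2 * K * exp (δ * ‖w‖) * exp (-(δ * ‖ζ‖)) := by
          rw [mul_assoc _ (exp _), ← exp_add]; ring_nf
  have hG : DiffContOnCl ℂ (fun ζ => D (w + ζ)⁻¹) {ζ | 0 < ζ.re} := by
    refine DifferentiableOn.diffContOnCl fun ζ hζ => ?_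
    rw [Complex.closure_setOfPred_lt_re] at hζ
    have hinv : DifferentiableAt ℂ (fun ζ : ℂ => (w + ζ)⁻¹) ζ :=
      (differentiableAt_id.const_add w).inv (hne ζ hζ)
    exact ((hD.differentiableAt ((isOpen_borelDisk hR).mem_nhds (hmem ζ hζ))).comp ζ
      hinv).differentiableWithinAt
  have := apply_ofReal_eq_zero hG hdecay (by positivity) hu
  rwa [show w + u = 1 / z by ring, one_div, inv_inv] at this

theorem eqOn_of_norm_sub_sum_le {R σ ν : ℝ} {f g : ℂ → ℂ} {a : ℕ → ℂ} (hR : 0 < R) (hσ : 0 < σ)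
    (hf : DifferentiableOn ℂ f (borelDisk R)) (hg : DifferentiableOn ℂ g (borelDisk R))
    (hfa : ∀ M : ℕ, ∀ z ∈ borelDisk R,
      ‖f z - ∑ m ∈ Finset.range M, a m * z ^ m‖ ≤ ν * σ ^ M * M.factorial * ‖z‖ ^ M)
    (hga : ∀ M : ℕ, ∀ z ∈ borelDisk R,
      ‖g z - ∑ m ∈ Finset.range M, a m * z ^ m‖ ≤ ν * σ ^ M * M.factorial * ‖z‖ ^ M) :
    EqOn f g (borelDisk R) := by
  refine fun z hz => sub_eq_zero.1 <| eqOn_zero_of_norm_le_factorial_mul_pow (K := 2 * ν)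
    hR hσ (hf.sub hg) (fun M z hz => ?_) hz
  set P := ∑ m ∈ Finset.range M, a m * z ^ m
  calc ‖(f - g) z‖ = ‖(f z - P) - (g z - P)‖ := by rw [Pi.sub_apply, sub_sub_sub_cancel_right]
    _ ≤ ‖f z - P‖ + ‖g z - P‖ := norm_sub_le _ _
    _ ≤ 2 * ν * σ ^ M * M.factorial * ‖z‖ ^ M := by linarith [hfa M z hz, hga M z hz]

theorem tendstoLocallyUniformlyOn_of_lipschitzOnWith {ι α β : Type*} [PseudoMetricSpace α]
    [PseudoMetricSpace β] {f : ι → α → β} {g : α → β} {l : Filter ι} [l.NeBot] {s : Set α}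
    {L : NNReal} (hf : ∀ᶠ i in l, LipschitzOnWith L (f i) s)
    (hg : ∀ x ∈ s, Tendsto (fun i => f i x) l (𝓝 (g x))) :
    TendstoLocallyUniformlyOn f g l s := by
  have hgL : ∀ x ∈ s, ∀ y ∈ s, dist (g x) (g y) ≤ L * dist x y := fun x hx y hy =>
    le_of_tendsto ((hg x hx).dist (hg y hy)) (hf.mono fun i hi => hi.dist_le_mul x hx y hy)
  rw [Metric.tendstoLocallyUniformlyOn_iff]
  intro ε hε x hx
  set ρ := ε / (3 * (L + 1))
  have hρ : 0 < ρ := by positivity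
  have hLρ : L * ρ ≤ ε / 3 := calc
    L * ρ = ε / 3 * (L / (L + 1)) := by simp only [ρ]; field_simp
    _ ≤ ε / 3 * 1 := by gcongr; exact div_le_one_of_le₀ (by linarith) (by positivity)
    _ = ε / 3 := mul_one _
  refine ⟨s ∩ ball x ρ, inter_mem_nhdsWithin s (ball_mem_nhds x hρ), ?_⟩
  filter_upwards [hf, Metric.tendsto_nhds.1 (hg x hx) (ε / 3) (by positivity)] with i hi hix
  rintro y ⟨hys, hyx⟩
  have hyx' : dist y x < ρ := hyx
  calc dist (g y) (f i y) ≤ dist (g y) (g x) + dist (g x) (f i x) + dist (f i x) (f i y) :=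
        dist_triangle4 _ _ _ _
    _ ≤ L * ρ + dist (g x) (f i x) + L * ρ := by
        gcongr
        · exact (hgL y hys x hx).trans (by gcongr)
        · exact (hi.dist_le_mul x hx y hys).trans (by rw [dist_comm]; gcongr)
    _ < ε := by rw [dist_comm] at hix; linarith

section NormalFamily

variable {E : Type*} [NormedAddCommGroup E] [NormedSpace ℂ E]

theorem lipschitzOnWith_ball_of_norm_le {f : ℂ → E} {x : ℂ} {r B : ℝ} (hr : 0 < r)
    (hf : DifferentiableOn ℂ f (ball x (2 * r))) (hB : ∀ z ∈ ball x (2 * r), ‖f z‖ ≤ B) :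
    LipschitzOnWith (B / r).toNNReal f (ball x r) := by
  have hsub : ∀ w ∈ ball x r, closedBall w r ⊆ ball x (2 * r) := fun w hw v hv => by
    rw [mem_ball] at hw ⊢; rw [mem_closedBall] at hv
    linarith [dist_triangle v w x]
  refine (convex_ball x r).lipschitzOnWith_of_nnnorm_deriv_le (fun w hw => ?_) (fun w hw => ?_)
  · exact hf.differentiableAt (isOpen_ball.mem_nhds (hsub w hw (mem_closedBall_self hr.le)))
  · rw [← NNReal.coe_le_coe, coe_nnnorm, Real.coe_toNNReal']
    exact (Complex.norm_deriv_le_of_forall_mem_sphere_norm_le hr (hf.diffContOnCl_ball (hsub w hw))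
      fun z hz => hB z (hsub w hw (sphere_subset_closedBall hz))).trans (le_max_left _ _)

theorem differentiableOn_of_tendsto_of_norm_le [CompleteSpace E] {ι : Type*} {f : ι → ℂ → E}
    {g : ℂ → E} {l : Filter ι} [l.NeBot] {U : Set ℂ} {B : ℝ} (hU : IsOpen U)
    (hf : ∀ᶠ i in l, DifferentiableOn ℂ (f i) U) (hB : ∀ᶠ i in l, ∀ z ∈ U, ‖f i z‖ ≤ B)
    (hg : ∀ z ∈ U, Tendsto (fun i => f i z) l (𝓝 (g z))) : DifferentiableOn ℂ g U := by
  intro x hx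
  obtain ⟨r, hr, hball⟩ : ∃ r > 0, ball x (2 * r) ⊆ U := by
    obtain ⟨ε, hε, hεU⟩ := Metric.isOpen_iff.1 hU x hx
    exact ⟨ε / 2, half_pos hε, by rwa [mul_div_cancel₀ _ two_ne_zero]⟩
  have hsub : ball x r ⊆ U := (ball_subset_ball (by linarith)).trans hball
  have hlip : ∀ᶠ i in l, LipschitzOnWith (B / r).toNNReal (f i) (ball x r) :=
    (hf.and hB).mono fun i hi =>
      lipschitzOnWith_ball_of_norm_le hr (hi.1.mono hball) fun z hz => hi.2 z (hball hz)
  have hloc := tendstoLocallyUniformlyOn_of_lipschitzOnWith hlip fun z hz => hg z (hsub hz)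
  exact ((hloc.differentiableOn (hf.mono fun i hi => hi.mono hsub) isOpen_ball).differentiableAt
    (isOpen_ball.mem_nhds (mem_ball_self hr))).differentiableWithinAt

end NormalFamily

theorem Ultrafilter.exists_tendsto_of_eventually_norm_le {ι E : Type*} [NormedAddCommGroup E]
    [ProperSpace E] (𝒰 : Ultrafilter ι) {v : ι → E} {B : ℝ} (h : ∀ᶠ i in 𝒰, ‖v i‖ ≤ B) :
    ∃ w, Tendsto v 𝒰 (𝓝 w) := by
  have hmem : (𝒰.map v : Filter E) ≤ 𝓟 (closedBall 0 B) := by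
    rw [Ultrafilter.coe_map, le_principal_iff]
    exact h.mono fun i hi => mem_closedBall_zero_iff.2 hi
  obtain ⟨w, -, hw⟩ := (isCompact_closedBall (0 : E) B).ultrafilter_le_nhds (𝒰.map v) hmem
  exact ⟨w, hw⟩

theorem norm_sub_sum_le_of_tendsto {ι 𝕜 : Type*} [NormedRing 𝕜] {l : Filter ι} [l.NeBot]
    {f : ι → 𝕜} {y z : 𝕜} {c : ι → ℕ → 𝕜} {c₀ : ℕ → 𝕜} {r : ι → 𝕜} {M : ℕ} {b : ℝ}
    (hf : Tendsto f l (𝓝 y)) (hc : ∀ m, Tendsto (fun i => c i m) l (𝓝 (c₀ m)))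
    (hexp : ∀ᶠ i in l, f i = ∑ m ∈ Finset.range M, c i m * z ^ m + r i)
    (hr : ∀ᶠ i in l, ‖r i‖ ≤ b) :
    ‖y - ∑ m ∈ Finset.range M, c₀ m * z ^ m‖ ≤ b := by
  have hlim := hf.sub (tendsto_finsetSum (Finset.range M) fun m _ => (hc m).mul_const (z ^ m))
  refine le_of_tendsto hlim.norm ?_
  filter_upwards [hexp, hr] with i hi hri
  rwa [hi, add_sub_cancel_left]

theorem stmt12_general (R σ ν : ℝ) (hR : 1 ≤ R) (hσ : 1 ≤ σ) (hν : 0 < ν)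
    (A : ℂ → ℂ) (Aτ : ℝ → ℂ → ℂ) (a : ℕ → ℂ) (aτ : ℝ → ℕ → ℂ)
    (Rem : ℕ → ℂ → ℂ) (Remτ : ℝ → ℕ → ℂ → ℂ)
    (hA : DifferentiableOn ℂ A {z : ℂ | 1 / R < (1 / z).re})
    (hAτ : ∀ τ : ℝ, 0 < τ → DifferentiableOn ℂ (Aτ τ) {z : ℂ | 1 / R < (1 / z).re})
    (hexp : ∀ M : ℕ, ∀ z ∈ {z : ℂ | 1 / R < (1 / z).re},
      A z = ∑ m ∈ Finset.range M, a m * z ^ m + Rem M z)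
    (hexpτ : ∀ τ : ℝ, 0 < τ → ∀ M : ℕ, ∀ z ∈ {z : ℂ | 1 / R < (1 / z).re},
      Aτ τ z = ∑ m ∈ Finset.range M, aτ τ m * z ^ m + Remτ τ M z)
    (haτ : ∀ τ : ℝ, 0 < τ → ∀ m : ℕ, ‖aτ τ m‖ ≤ ν * σ ^ m * m.factorial)
    (hRem : ∀ M : ℕ, ∀ z ∈ {z : ℂ | 1 / R < (1 / z).re},
      ‖Rem M z‖ ≤ ν * σ ^ M * M.factorial * ‖z‖ ^ M)
    (hRemτ : ∀ τ : ℝ, 0 < τ → ∀ M : ℕ, ∀ z ∈ {z : ℂ | 1 / R < (1 / z).re},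
      ‖Remτ τ M z‖ ≤ ν * σ ^ M * M.factorial * ‖z‖ ^ M)
    (hcoef : ∀ m : ℕ, Tendsto (fun τ : ℝ => aτ τ m) atTop (nhds (a m))) :
    ∀ z ∈ {z : ℂ | 1 / R < (1 / z).re},
      Tendsto (fun τ : ℝ => Aτ τ z) atTop (nhds (A z)) := by
  have hR0 : 0 < R := by linarith
  have hσ0 : 0 < σ := by linarith
  have hpos : ∀ᶠ τ : ℝ in atTop, 0 < τ := eventually_gt_atTop 0
  have hbound : ∀ᶠ τ in atTop, ∀ z ∈ borelDisk R, ‖Aτ τ z‖ ≤ ν + ν * σ * R := by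
    filter_upwards [hpos] with τ hτ z hz
    have h0 : ‖aτ τ 0‖ ≤ ν := by simpa using haτ τ hτ 0
    have h1 : ‖Remτ τ 1 z‖ ≤ ν * σ * ‖z‖ := by simpa using hRemτ τ hτ 1 z hz
    rw [hexpτ τ hτ 1 z hz, Finset.sum_range_one, pow_zero, mul_one]
    refine (norm_add_le _ _).trans (add_le_add h0 (h1.trans ?_))
    gcongr
    exact (norm_lt_of_mem_borelDisk hR0 hz).le
  intro z₀ hz₀
  rw [tendsto_iff_ultrafilter]
  intro 𝒰 h𝒰
  have hbound𝒰 : ∀ᶠ τ in (𝒰 : Filter ℝ), ∀ z ∈ borelDisk R, ‖Aτ τ z‖ ≤ ν + ν * σ * R :=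
    h𝒰 hbound
  have hpos𝒰 : ∀ᶠ τ in (𝒰 : Filter ℝ), 0 < τ := h𝒰 hpos
  have hlim : ∀ z ∈ borelDisk R, ∃ w, Tendsto (fun τ => Aτ τ z) 𝒰 (𝓝 w) := fun z hz =>
    𝒰.exists_tendsto_of_eventually_norm_le (hbound𝒰.mono fun τ h => h z hz)
  choose! g hg using hlim
  have hgd : DifferentiableOn ℂ g (borelDisk R) := differentiableOn_of_tendsto_of_norm_le
    (isOpen_borelDisk hR0) (hpos𝒰.mono hAτ) hbound𝒰 hg
  have hgA : EqOn g A (borelDisk R) := eqOn_of_norm_sub_sum_le hR0 hσ0 hgd hA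
    (fun M z hz => norm_sub_sum_le_of_tendsto (hg z hz) (fun m => (hcoef m).mono_left h𝒰)
      (hpos𝒰.mono fun τ hτ => hexpτ τ hτ M z hz) (hpos𝒰.mono fun τ hτ => hRemτ τ hτ M z hz))
    fun M z hz => by rw [hexp M z hz, add_sub_cancel_left]; exact hRem M z hz
  simpa only [hgA hz₀] using hg z₀ hz₀

/-- Stability of Borel summation: if `A` and the family `A_τ` are analytic on
`C_R = {z : Re z⁻¹ > R⁻¹}` with asymptotic expansions whose coefficients and remainders obey
the uniform factorial bounds `‖a_m‖, ‖a_{τ,m}‖ ≤ ν σ^m m!` and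
`‖Rem_M z‖, ‖Rem_{τ,M} z‖ ≤ ν σ^M M! ‖z‖^M`, and if `a_{τ,m} → a_m` for every `m` as
`τ → ∞`, then `A_τ z → A z` for every `z ∈ C_R`. -/
theorem stmt12 (R σ ν : ℝ) (hR : 1 ≤ R) (hσ : 1 ≤ σ) (hν : 0 < ν)
    (A : ℂ → ℂ) (Aτ : ℝ → ℂ → ℂ) (a : ℕ → ℂ) (aτ : ℝ → ℕ → ℂ)
    (Rem : ℕ → ℂ → ℂ) (Remτ : ℝ → ℕ → ℂ → ℂ)
    (hA : DifferentiableOn ℂ A {z : ℂ | 1 / R < (1 / z).re})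
    (hAτ : ∀ τ : ℝ, 0 < τ → DifferentiableOn ℂ (Aτ τ) {z : ℂ | 1 / R < (1 / z).re})
    (hexp : ∀ M : ℕ, ∀ z ∈ {z : ℂ | 1 / R < (1 / z).re},
      A z = ∑ m ∈ Finset.range M, a m * z ^ m + Rem M z)
    (hexpτ : ∀ τ : ℝ, 0 < τ → ∀ M : ℕ, ∀ z ∈ {z : ℂ | 1 / R < (1 / z).re},
      Aτ τ z = ∑ m ∈ Finset.range M, aτ τ m * z ^ m + Remτ τ M z)
    (ha : ∀ m : ℕ, ‖a m‖ ≤ ν * σ ^ m * m.factorial)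
    (haτ : ∀ τ : ℝ, 0 < τ → ∀ m : ℕ, ‖aτ τ m‖ ≤ ν * σ ^ m * m.factorial)
    (hRem : ∀ M : ℕ, ∀ z ∈ {z : ℂ | 1 / R < (1 / z).re},
      ‖Rem M z‖ ≤ ν * σ ^ M * M.factorial * ‖z‖ ^ M)
    (hRemτ : ∀ τ : ℝ, 0 < τ → ∀ M : ℕ, ∀ z ∈ {z : ℂ | 1 / R < (1 / z).re},
      ‖Remτ τ M z‖ ≤ ν * σ ^ M * M.factorial * ‖z‖ ^ M)
    (hcoef : ∀ m : ℕ, Tendsto (fun τ : ℝ => aτ τ m) atTop (nhds (a m))) :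
    ∀ z ∈ {z : ℂ | 1 / R < (1 / z).re},
      Tendsto (fun τ : ℝ => Aτ τ z) atTop (nhds (A z)) :=
  stmt12_general R σ ν hR hσ hν A Aτ a aτ Rem Remτ hA hAτ hexp hexpτ haτ hRem hRemτ hcoef
end

section
/- (Momentum-space Green function bound) For d ≤ 3, κ > 0, τ > 0, t ∈ (0,1), define f_τ(p) = (1/τ)·e^{(1-t)(p²+κ)/τ}/(e^{(p²+κ)/τ} - 1) for p ∈ ℝ^d. Then |f_τ(p) - 1/(p²+κ)| ≤ C/(p²+κ) for a constant C independent of τ, p, and moreover ∫_{ℝ^d} (f_τ(p) - 1/(p²+κ))² dp → 0 as τ → ∞ by dominated convergence, since f_τ(p) → 1/(p²+κ) pointwise. -/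
/-!
With `A = ‖p‖² + κ`, `x = A / τ` and `s = 1 - t`, the symbol is
`A⁻¹ · x e^{s x} / (e^x - 1)`. The scalar factor lies in `(0, 1 / (1 - s)]`, since
`e^x = e^{s x} e^{(1-s) x} ≥ e^{s x} (1 + (1 - s) x)`, and it tends to `1` as `x → 0`,
i.e. as `τ → ∞`. The squared difference is thus dominated by a multiple of `(‖p‖² + κ)⁻²`,
which is integrable in dimension `< 4`, and dominated convergence gives the `L²` convergence.
-/

open Filter MeasureTheory Topology Real Module

noncomputable def greenSymbol (s τ A : ℝ) : ℝ :=
  (1 / τ) * exp (s * A / τ) / (exp (A / τ) - 1)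

section GreenSymbol

variable {s x τ A : ℝ}

lemma one_sub_mul_mul_exp_mul_le_exp_sub_one (hs : 0 ≤ s) (hx : 0 ≤ x) :
    (1 - s) * x * exp (s * x) ≤ exp x - 1 := by
  have hsplit : exp x = exp (s * x) * exp ((1 - s) * x) := by rw [← exp_add]; ring_nf
  have hlin : (1 - s) * x + 1 ≤ exp ((1 - s) * x) := add_one_le_exp _
  have hone : 1 ≤ exp (s * x) := one_le_exp (by positivity)
  nlinarith [mul_le_mul_of_nonneg_left hlin (exp_pos (s * x)).le]

lemma mul_exp_mul_div_exp_sub_one_le (hs₀ : 0 ≤ s) (hs₁ : s < 1) (hx : 0 < x) :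
    x * exp (s * x) / (exp x - 1) ≤ (1 - s)⁻¹ := by
  rw [← one_div, div_le_div_iff₀ (by linarith [add_one_lt_exp hx.ne']) (by linarith)]
  nlinarith [one_sub_mul_mul_exp_mul_le_exp_sub_one hs₀ hx.le]

lemma tendsto_mul_exp_mul_div_exp_sub_one (s : ℝ) :
    Tendsto (fun x => x * exp (s * x) / (exp x - 1)) (𝓝[≠] 0) (𝓝 1) := by
  have hslope : Tendsto (fun x => x⁻¹ * (exp x - 1)) (𝓝[≠] 0) (𝓝 1) := by
    simpa using (hasDerivAt_exp 0).tendsto_slope_zero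
  have hnum : Tendsto (fun x => exp (s * x)) (𝓝[≠] 0) (𝓝 1) := by
    simpa using ((continuous_const.mul continuous_id).rexp.tendsto 0).mono_left
      nhdsWithin_le_nhds
  refine (div_one (1 : ℝ) ▸ hnum.div hslope one_ne_zero).congr'
    (Eventually.of_forall fun x => ?_)
  rw [Pi.div_apply, div_mul_eq_div_div, div_inv_eq_mul, mul_comm]

lemma greenSymbol_eq (hA : A ≠ 0) :
    greenSymbol s τ A = 1 / A * (A / τ * exp (s * (A / τ)) / (exp (A / τ) - 1)) := by
  rw [greenSymbol, ← mul_div_assoc, ← mul_assoc, div_mul_div_cancel₀ hA, mul_div_assoc s A τ]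

lemma abs_greenSymbol_sub_one_div_le (hs₀ : 0 ≤ s) (hs₁ : s < 1) (hτ : 0 < τ) (hA : 0 < A) :
    |greenSymbol s τ A - 1 / A| ≤ (1 - s)⁻¹ / A := by
  set x := A / τ
  have hx : 0 < x := div_pos hA hτ
  have hg₀ : 0 < x * exp (s * x) / (exp x - 1) :=
    div_pos (by positivity) (by linarith [add_one_lt_exp hx.ne'])
  have hg₁ := mul_exp_mul_div_exp_sub_one_le hs₀ hs₁ hx
  have hC : 1 ≤ (1 - s)⁻¹ := one_le_inv₀ (by linarith) |>.2 (by linarith)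
  calc |greenSymbol s τ A - 1 / A| = |x * exp (s * x) / (exp x - 1) - 1| / A := by
        rw [greenSymbol_eq hA.ne', ← mul_sub_one, abs_mul, abs_of_pos (one_div_pos.2 hA),
          one_div_mul_eq_div]
    _ ≤ (1 - s)⁻¹ / A := by
        gcongr
        exact abs_sub_le_iff.2 ⟨by linarith, by linarith⟩

lemma tendsto_greenSymbol_atTop (s : ℝ) (hA : A ≠ 0) :
    Tendsto (fun τ => greenSymbol s τ A) atTop (𝓝 (1 / A)) := by
  have hx : Tendsto (fun τ => A / τ) atTop (𝓝[≠] 0) :=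
    tendsto_nhdsWithin_of_tendsto_nhds_of_eventually_within _
      (tendsto_const_nhds.div_atTop tendsto_id)
      (by filter_upwards [eventually_gt_atTop 0] with τ hτ using div_ne_zero hA hτ.ne')
  have hlim := ((tendsto_mul_exp_mul_div_exp_sub_one s).comp hx).const_mul (1 / A)
  rw [mul_one] at hlim
  exact hlim.congr fun τ => (greenSymbol_eq hA).symm

section Integral

variable {E : Type*} [NormedAddCommGroup E] [NormedSpace ℝ E] [FiniteDimensional ℝ E]
  [MeasurableSpace E] [BorelSpace E] {μ : Measure E} [μ.IsAddHaarMeasure]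

lemma integrable_inv_sq_norm_sq_add (hE : finrank ℝ E < 4) {κ : ℝ} (hκ : 0 < κ) :
    Integrable (fun p : E => ((‖p‖ ^ 2 + κ) ^ 2)⁻¹) μ := by
  set m := min κ 1
  have hm : 0 < m := lt_min hκ one_pos
  have hint := integrable_rpow_neg_one_add_norm_sq (μ := μ) (r := 4) (by exact_mod_cast hE)
  refine (hint.const_mul (m⁻¹ ^ 2)).mono' (by fun_prop) (ae_of_all _ fun p => ?_)
  have hlow : m * (1 + ‖p‖ ^ 2) ≤ ‖p‖ ^ 2 + κ := by
    nlinarith [min_le_left κ 1, min_le_right κ 1, sq_nonneg ‖p‖]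
  rw [show (-4 : ℝ) / 2 = -(2 : ℕ) by norm_num, rpow_neg (by positivity), rpow_natCast,
    Real.norm_of_nonneg (by positivity)]
  calc ((‖p‖ ^ 2 + κ) ^ 2)⁻¹ ≤ ((m * (1 + ‖p‖ ^ 2)) ^ 2)⁻¹ := by gcongr
    _ = m⁻¹ ^ 2 * ((1 + ‖p‖ ^ 2) ^ 2)⁻¹ := by rw [mul_pow, mul_inv, inv_pow]

lemma tendsto_integral_sq_greenSymbol_sub (hE : finrank ℝ E < 4) {κ : ℝ} (hκ : 0 < κ)
    (hs₀ : 0 ≤ s) (hs₁ : s < 1) :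
    Tendsto (fun τ => ∫ p, (greenSymbol s τ (‖p‖ ^ 2 + κ) - 1 / (‖p‖ ^ 2 + κ)) ^ 2 ∂μ)
      atTop (𝓝 0) := by
  have hA : ∀ p : E, 0 < ‖p‖ ^ 2 + κ := fun p => by positivity
  have hmeas : ∀ τ, Measurable fun p : E =>
      (greenSymbol s τ (‖p‖ ^ 2 + κ) - 1 / (‖p‖ ^ 2 + κ)) ^ 2 := by
    intro τ; unfold greenSymbol; fun_prop
  have hdom := tendsto_integral_filter_of_dominated_convergence (μ := μ) (l := atTop)
    (fun p => (1 - s)⁻¹ ^ 2 * ((‖p‖ ^ 2 + κ) ^ 2)⁻¹)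
    (Eventually.of_forall fun τ => (hmeas τ).aestronglyMeasurable)
    ?_ ((integrable_inv_sq_norm_sq_add hE hκ).const_mul _)
    (ae_of_all _ fun p => by
      have hlim :=
        ((tendsto_greenSymbol_atTop s (hA p).ne').sub_const (1 / (‖p‖ ^ 2 + κ))).pow 2
      rwa [sub_self, zero_pow two_ne_zero] at hlim)
  · rwa [integral_zero] at hdom
  · filter_upwards [eventually_gt_atTop 0] with τ hτ
    refine ae_of_all _ fun p => ?_
    have hbound := abs_le.1 (abs_greenSymbol_sub_one_div_le hs₀ hs₁ hτ (hA p))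
    rw [Real.norm_of_nonneg (sq_nonneg _), ← inv_pow, ← mul_pow, ← div_eq_mul_inv]
    exact sq_le_sq' hbound.1 hbound.2

end Integral

end GreenSymbol

/-- Momentum-space bound on the translation-invariant quantum Green function: for `d ≤ 3`,
`κ > 0` and fixed `t ∈ (0,1)`, the symbol
`f_τ(p) = (1/τ) e^{(1-t)(p²+κ)/τ}/(e^{(p²+κ)/τ} - 1)` satisfies
`|f_τ(p) - 1/(p²+κ)| ≤ C/(p²+κ)` with `C` independent of `τ > 0` and `p`; moreover
`f_τ(p) → 1/(p²+κ)` pointwise and `∫ (f_τ(p) - 1/(p²+κ))² dp → 0` as `τ → ∞`. -/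
theorem stmt19 (d : ℕ) (hd : d ≤ 3) (κ : ℝ) (hκ : 0 < κ)
    (t : ℝ) (ht : t ∈ Set.Ioo (0 : ℝ) 1) :
    (∃ C : ℝ, 0 < C ∧ ∀ τ : ℝ, 0 < τ → ∀ p : EuclideanSpace ℝ (Fin d),
      |(1 / τ) * Real.exp ((1 - t) * (‖p‖ ^ 2 + κ) / τ) /
          (Real.exp ((‖p‖ ^ 2 + κ) / τ) - 1) - 1 / (‖p‖ ^ 2 + κ)|
        ≤ C / (‖p‖ ^ 2 + κ)) ∧
    (∀ p : EuclideanSpace ℝ (Fin d),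
      Tendsto (fun τ : ℝ =>
          (1 / τ) * Real.exp ((1 - t) * (‖p‖ ^ 2 + κ) / τ) /
            (Real.exp ((‖p‖ ^ 2 + κ) / τ) - 1))
        atTop (nhds (1 / (‖p‖ ^ 2 + κ)))) ∧
    Tendsto (fun τ : ℝ =>
        ∫ p : EuclideanSpace ℝ (Fin d),
          ((1 / τ) * Real.exp ((1 - t) * (‖p‖ ^ 2 + κ) / τ) /
              (Real.exp ((‖p‖ ^ 2 + κ) / τ) - 1) - 1 / (‖p‖ ^ 2 + κ)) ^ 2)
      atTop (nhds 0) := by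
  obtain ⟨ht₀, ht₁⟩ := ht
  have hs₀ : 0 ≤ 1 - t := by linarith
  have hs₁ : 1 - t < 1 := by linarith
  have hA : ∀ p : EuclideanSpace ℝ (Fin d), 0 < ‖p‖ ^ 2 + κ := fun p => by positivity
  have hdim : finrank ℝ (EuclideanSpace ℝ (Fin d)) < 4 := by
    rw [finrank_euclideanSpace_fin]; omega
  refine ⟨⟨(1 - (1 - t))⁻¹, inv_pos.2 (by linarith),
      fun τ hτ p => abs_greenSymbol_sub_one_div_le hs₀ hs₁ hτ (hA p)⟩,
    fun p => tendsto_greenSymbol_atTop _ (hA p).ne',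
    tendsto_integral_sq_greenSymbol_sub hdim hκ hs₀ hs₁⟩
end
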